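/- arXiv:1309.7446 — 3 statements merged into one kernel-verified Lean document; each statement's English description precedes it below -/
import Mathlib

section
/- Let f : ℝⁿ → ℝ be smooth and let u : ℝⁿ → ℝ be smooth with compact support. Then ∫_{ℝⁿ} (2 ∇f·∇u + u Δf)² = 4 ∫_{ℝⁿ} (∇f·∇u)² − ∫_{ℝⁿ} (Δf)² u² − 2 ∫_{ℝⁿ} (∇(Δf)·∇f) u². -/
open MeasureTheory Real
open scoped BigOperators RealInnerProductSpace

noncomputable section

/-- The Euclidean Laplacian `Δ f = ∑ l ∂²f/∂x_l²` of a real-valued function on `ℝⁿ`. -/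
def lap {n : ℕ} (f : EuclideanSpace ℝ (Fin n) → ℝ) (x : EuclideanSpace ℝ (Fin n)) : ℝ :=
  ∑ l : Fin n, fderiv ℝ (fun y => fderiv ℝ f y (EuclideanSpace.single l 1)) x
    (EuclideanSpace.single l 1)
variable {n : ℕ}

lemma contDiff_D {g : EuclideanSpace ℝ (Fin n) → ℝ} (h : ContDiff ℝ (⊤ : ℕ∞) g)
    (v : EuclideanSpace ℝ (Fin n)) : ContDiff ℝ (⊤ : ℕ∞) (fun x => fderiv ℝ g x v) :=
  (h.fderiv_right (by simp)).clm_apply contDiff_const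

lemma contDiff_lap {f : EuclideanSpace ℝ (Fin n) → ℝ} (hf : ContDiff ℝ (⊤ : ℕ∞) f) :
    ContDiff ℝ (⊤ : ℕ∞) (lap f) := by
  apply ContDiff.sum
  intro l _
  exact contDiff_D (contDiff_D hf _) _

lemma inner_grad_eq (g h : EuclideanSpace ℝ (Fin n) → ℝ) (x : EuclideanSpace ℝ (Fin n)) :
    ⟪gradient g x, gradient h x⟫ =
      ∑ l : Fin n, fderiv ℝ g x (EuclideanSpace.single l 1) *
        fderiv ℝ h x (EuclideanSpace.single l 1) := by
  have key : ∀ (k : EuclideanSpace ℝ (Fin n) → ℝ), ∀ l : Fin n, gradient k x l =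
      fderiv ℝ k x (EuclideanSpace.single l 1) := by
    intro k l
    have : ⟪gradient k x, EuclideanSpace.single l (1:ℝ)⟫
        = fderiv ℝ k x (EuclideanSpace.single l 1) := by
      simp [gradient, InnerProductSpace.toDual_symm_apply]
    rw [EuclideanSpace.inner_single_right] at this
    simpa using this
  rw [PiLp.inner_apply]
  simp only [RCLike.inner_apply, conj_trivial]
  exact Finset.sum_congr rfl fun l _ => by rw [key g l, key h l, mul_comm]

lemma integrable_aux {u g : EuclideanSpace ℝ (Fin n) → ℝ} (hsupp : HasCompactSupport u)
    (hg : Continuous g) (h0 : ∀ x, x ∉ tsupport u → g x = 0) : Integrable g := by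
  refine hg.integrable_of_hasCompactSupport (hsupp.mono' ?_)
  intro x hx
  by_contra hn
  exact hx (h0 x hn)

/-- For `f` smooth and `u` smooth with compact support on `ℝⁿ`:
`∫ (2∇f·∇u + uΔf)² = 4∫(∇f·∇u)² − ∫(Δf)²u² − 2∫(∇(Δf)·∇f)u²`. -/
theorem integral_cross_term_identity {n : ℕ} (f u : EuclideanSpace ℝ (Fin n) → ℝ)
    (hf : ContDiff ℝ (⊤ : ℕ∞) f) (hu : ContDiff ℝ (⊤ : ℕ∞) u) (hsupp : HasCompactSupport u) :
    ∫ x, (2 * ⟪gradient f x, gradient u x⟫ + u x * lap f x) ^ 2 =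
      4 * (∫ x, ⟪gradient f x, gradient u x⟫ ^ 2) -
        (∫ x, (lap f x) ^ 2 * (u x) ^ 2) -
        2 * ∫ x, ⟪gradient (lap f) x, gradient f x⟫ * (u x) ^ 2 := by
  set e : Fin n → EuclideanSpace ℝ (Fin n) := fun l => EuclideanSpace.single l 1 with he
  have hL : ContDiff ℝ (⊤ : ℕ∞) (lap f) := contDiff_lap hf
  have hfd : Differentiable ℝ f := hf.differentiable (by simp)
  have hud : Differentiable ℝ u := hu.differentiable (by simp)
  have hLd : Differentiable ℝ (lap f) := hL.differentiable (by simp)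
  have hu0 : ∀ x, x ∉ tsupport u → u x = 0 := fun x hx => image_eq_zero_of_notMem_tsupport hx
  -- gradient of u vanishes off the support
  have hgu0 : ∀ x, x ∉ tsupport u → gradient u x = 0 := by
    intro x hx
    simp [gradient, fderiv_of_notMem_tsupport ℝ hx]
  -- the square of u
  set U : EuclideanSpace ℝ (Fin n) → ℝ := fun y => u y ^ 2 with hU
  have hUd : Differentiable ℝ U := hud.pow 2
  have hUc : Continuous U := hu.continuous.pow 2
  have htsU : tsupport U ⊆ tsupport u := by
    apply closure_mono
    intro x hx
    simp only [Function.mem_support] at hx ⊢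
    intro h; exact hx (by simp [hU, h])
  have hdU : ∀ x l, fderiv ℝ U x (e l) = 2 * u x * fderiv ℝ u x (e l) := by
    intro x l
    have : U = fun y => u y * u y := by funext y; simp [hU]; ring
    rw [this, fderiv_fun_mul (hud x) (hud x)]
    simp only [ContinuousLinearMap.add_apply, ContinuousLinearMap.smul_apply, smul_eq_mul]
    ring
  -- the vector fields L * ∂_l f
  set F : Fin n → EuclideanSpace ℝ (Fin n) → ℝ :=
    fun l y => lap f y * fderiv ℝ f y (e l) with hF
  have hFc : ∀ l, ContDiff ℝ (⊤ : ℕ∞) (F l) := fun l => hL.mul (contDiff_D hf (e l))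
  have hdF : ∀ x l, fderiv ℝ (F l) x (e l) =
      lap f x * fderiv ℝ (fun y => fderiv ℝ f y (e l)) x (e l) +
        fderiv ℝ f x (e l) * fderiv ℝ (lap f) x (e l) := by
    intro x l
    rw [hF]
    rw [fderiv_fun_mul (hLd x) ((contDiff_D hf (e l)).differentiable (by simp) x)]
    simp only [ContinuousLinearMap.add_apply, ContinuousLinearMap.smul_apply, smul_eq_mul]
  -- integrabilities
  have int1 : ∀ l : Fin n, Integrable (fun x => fderiv ℝ (F l) x (e l) * U x) := by
    intro l
    refine integrable_aux hsupp (((contDiff_D (hFc l) (e l)).continuous).mul hUc) ?_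
    intro x hx; simp [hU, hu0 x hx]
  have int2 : ∀ l : Fin n, Integrable (fun x => F l x * fderiv ℝ U x (e l)) := by
    intro l
    refine integrable_aux hsupp (((hFc l).continuous).mul ((contDiff_D (hu.pow 2) (e l)).continuous)) ?_
    intro x hx
    have : x ∉ tsupport U := fun h => hx (htsU h)
    simp [fderiv_of_notMem_tsupport ℝ this]
  have int3 : ∀ l : Fin n, Integrable (fun x => F l x * U x) := by
    intro l
    refine integrable_aux hsupp (((hFc l).continuous).mul hUc) ?_
    intro x hx; simp [hU, hu0 x hx]
  -- integration by parts per coordinate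
  have ibp : ∀ l : Fin n,
      ∫ x, F l x * fderiv ℝ U x (e l) = - ∫ x, fderiv ℝ (F l) x (e l) * U x := by
    intro l
    exact integral_mul_fderiv_eq_neg_fderiv_mul_of_integrable (int1 l) (int2 l) (int3 l)
      (fun x _ => (hFc l).differentiable (by simp) x) (fun x _ => hUd x)
  -- the key identity
  have key : ∫ x, 2 * lap f x * u x * ⟪gradient f x, gradient u x⟫ =
      - ∫ x, (⟪gradient (lap f) x, gradient f x⟫ + lap f x * lap f x) * U x := by
    calc ∫ x, 2 * lap f x * u x * ⟪gradient f x, gradient u x⟫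
        = ∫ x, ∑ l : Fin n, F l x * fderiv ℝ U x (e l) := by
          congr 1; funext x
          rw [inner_grad_eq f u x, Finset.mul_sum]
          refine (Finset.sum_congr rfl fun l _ => ?_).symm
          rw [hdU x l]; simp only [hF]; ring
      _ = ∑ l : Fin n, ∫ x, F l x * fderiv ℝ U x (e l) := integral_finset_sum _ (fun l _ => int2 l)
      _ = ∑ l : Fin n, - ∫ x, fderiv ℝ (F l) x (e l) * U x := Finset.sum_congr rfl fun l _ => ibp l
      _ = - ∑ l : Fin n, ∫ x, fderiv ℝ (F l) x (e l) * U x := by rw [Finset.sum_neg_distrib]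
      _ = - ∫ x, ∑ l : Fin n, fderiv ℝ (F l) x (e l) * U x := by
          rw [integral_finset_sum _ (fun l _ => int1 l)]
      _ = - ∫ x, (⟪gradient (lap f) x, gradient f x⟫ + lap f x * lap f x) * U x := by
          congr 1
          congr 1
          funext x
          rw [inner_grad_eq (lap f) f x]
          have hlapx : lap f x = ∑ l : Fin n,
              fderiv ℝ (fun y => fderiv ℝ f y (e l)) x (e l) := rfl
          calc ∑ l : Fin n, fderiv ℝ (F l) x (e l) * U x
              = ∑ l : Fin n, (lap f x * (fderiv ℝ (fun y => fderiv ℝ f y (e l)) x (e l) * U x)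
                  + fderiv ℝ (lap f) x (e l) * fderiv ℝ f x (e l) * U x) := by
                refine Finset.sum_congr rfl fun l _ => ?_
                rw [hdF x l]; ring
            _ = lap f x * ((∑ l : Fin n, fderiv ℝ (fun y => fderiv ℝ f y (e l)) x (e l)) * U x)
                  + (∑ l : Fin n, fderiv ℝ (lap f) x (e l) * fderiv ℝ f x (e l)) * U x := by
                simp only [Finset.sum_add_distrib, ← Finset.mul_sum, ← Finset.sum_mul]
            _ = ((∑ l : Fin n, fderiv ℝ (lap f) x (e l) * fderiv ℝ f x (e l))
                  + lap f x * lap f x) * U x := by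
                rw [← hlapx]; ring
  -- integrability for the expansion
  have cA : Continuous (fun x => ⟪gradient f x, gradient u x⟫) := by
    have : (fun x => ⟪gradient f x, gradient u x⟫) =
        fun x => ∑ l : Fin n, fderiv ℝ f x (e l) * fderiv ℝ u x (e l) :=
      funext fun x => inner_grad_eq f u x
    rw [this]
    exact continuous_finset_sum _ fun l _ =>
      (contDiff_D hf (e l)).continuous.mul (contDiff_D hu (e l)).continuous
  have cB : Continuous (fun x => ⟪gradient (lap f) x, gradient f x⟫) := by
    have : (fun x => ⟪gradient (lap f) x, gradient f x⟫) =
        fun x => ∑ l : Fin n, fderiv ℝ (lap f) x (e l) * fderiv ℝ f x (e l) :=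
      funext fun x => inner_grad_eq (lap f) f x
    rw [this]
    exact continuous_finset_sum _ fun l _ =>
      (contDiff_D hL (e l)).continuous.mul (contDiff_D hf (e l)).continuous
  have iA : Integrable (fun x => ⟪gradient f x, gradient u x⟫ ^ 2) := by
    refine integrable_aux hsupp (cA.pow 2) ?_
    intro x hx; simp [hgu0 x hx]
  have iT : Integrable (fun x => 2 * lap f x * u x * ⟪gradient f x, gradient u x⟫) := by
    refine integrable_aux hsupp
      ((((continuous_const.mul hL.continuous).mul hu.continuous).mul cA)) ?_
    intro x hx; simp [hu0 x hx]
  have iK : Integrable (fun x => (lap f x) ^ 2 * (u x) ^ 2) := by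
    refine integrable_aux hsupp ((hL.continuous.pow 2).mul (hu.continuous.pow 2)) ?_
    intro x hx; simp [hu0 x hx]
  have iJ : Integrable (fun x => ⟪gradient (lap f) x, gradient f x⟫ * (u x) ^ 2) := by
    refine integrable_aux hsupp (cB.mul (hu.continuous.pow 2)) ?_
    intro x hx; simp [hu0 x hx]
  -- split the key RHS
  have keysplit : ∫ x, (⟪gradient (lap f) x, gradient f x⟫ + lap f x * lap f x) * U x =
      (∫ x, ⟪gradient (lap f) x, gradient f x⟫ * (u x) ^ 2) +
        ∫ x, (lap f x) ^ 2 * (u x) ^ 2 := by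
    rw [← integral_add iJ iK]
    congr 1; funext x; simp only [hU]; ring
  -- expand the square
  have expand : ∫ x, (2 * ⟪gradient f x, gradient u x⟫ + u x * lap f x) ^ 2 =
      4 * (∫ x, ⟪gradient f x, gradient u x⟫ ^ 2) +
        2 * (∫ x, 2 * lap f x * u x * ⟪gradient f x, gradient u x⟫) +
        ∫ x, (lap f x) ^ 2 * (u x) ^ 2 := by
    calc ∫ x, (2 * ⟪gradient f x, gradient u x⟫ + u x * lap f x) ^ 2
        = ∫ x, (4 * ⟪gradient f x, gradient u x⟫ ^ 2 +
            (2 * (2 * lap f x * u x * ⟪gradient f x, gradient u x⟫) +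
              (lap f x) ^ 2 * (u x) ^ 2)) := by
          congr 1; funext x; ring
      _ = (∫ x, 4 * ⟪gradient f x, gradient u x⟫ ^ 2) +
            ((∫ x, 2 * (2 * lap f x * u x * ⟪gradient f x, gradient u x⟫)) +
              ∫ x, (lap f x) ^ 2 * (u x) ^ 2) := by
          have i23 : Integrable (fun x => 2 * (2 * lap f x * u x * ⟪gradient f x, gradient u x⟫) +
              (lap f x) ^ 2 * (u x) ^ 2) := (iT.const_mul 2).add iK
          have i1 : Integrable (fun x => 4 * ⟪gradient f x, gradient u x⟫ ^ 2) := iA.const_mul 4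
          have i2 : Integrable (fun x => 2 * (2 * lap f x * u x * ⟪gradient f x, gradient u x⟫)) :=
            iT.const_mul 2
          rw [integral_add i1 i23, integral_add i2 iK]
      _ = 4 * (∫ x, ⟪gradient f x, gradient u x⟫ ^ 2) +
            2 * (∫ x, 2 * lap f x * u x * ⟪gradient f x, gradient u x⟫) +
            ∫ x, (lap f x) ^ 2 * (u x) ^ 2 := by
          rw [integral_const_mul, integral_const_mul]; ring
  rw [expand, key, keysplit]
  ring

end
end

section
/- Let n ≥ 3 be an integer and let h, h_1, …, h_{n−1}, H be real numbers with 0 ≤ h ≤ h_1 ≤ h_2 ≤ ⋯ ≤ h_{n−1} ≤ H. Then 2 ∑_{i=1}^{n−1} h_i² − ( ∑_{i=1}^{n−1} h_i )² ≤ H² − (n−2)² h². -/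
lemma hessian_aux (k : ℕ) (h H : ℝ) (f : Fin (k + 1) → ℝ) (hmono : Monotone f)
    (h₀ : 0 ≤ h) (hlb : ∀ i, h ≤ f i) (hub : ∀ i, f i ≤ H) :
    2 * (∑ i, (f i) ^ 2) - (∑ i, f i) ^ 2 ≤ H ^ 2 - (k : ℝ) ^ 2 * h ^ 2 := by
  set M := f (Fin.last k) with hM
  have hM0 : 0 ≤ M := h₀.trans (hlb _)
  have hMH : M ≤ H := hub _
  rw [Fin.sum_univ_castSucc (f := fun i => f i ^ 2), Fin.sum_univ_castSucc (f := fun i => f i)]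
  set T := ∑ i : Fin k, f i.castSucc with hT
  have hQ : ∑ i : Fin k, f i.castSucc ^ 2 ≤ M * T := by
    rw [hT, Finset.mul_sum]
    apply Finset.sum_le_sum
    intro i _
    have h1 : 0 ≤ f i.castSucc := h₀.trans (hlb _)
    have h2 : f i.castSucc ≤ M := hmono (Fin.le_last _)
    nlinarith
  have hTlb : (k : ℝ) * h ≤ T := by
    rw [hT]
    calc (k : ℝ) * h = ∑ _i : Fin k, h := by
          simp [Finset.sum_const]
      _ ≤ ∑ i : Fin k, f i.castSucc := Finset.sum_le_sum fun i _ => hlb _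
  have hkh : 0 ≤ (k : ℝ) * h := mul_nonneg (Nat.cast_nonneg k) h₀
  nlinarith [sq_nonneg (T - M), sq_nonneg T, mul_le_mul hTlb hTlb hkh (hkh.trans hTlb)]

/-- If `n ≥ 3` and `0 ≤ h ≤ h_1 ≤ ⋯ ≤ h_{n−1} ≤ H`, then
`2 ∑ h_i² − (∑ h_i)² ≤ H² − (n−2)² h²`. -/
theorem hessian_eigenvalue_inequality (n : ℕ) (hn : 3 ≤ n) (h H : ℝ)
    (f : Fin (n - 1) → ℝ) (hmono : Monotone f) (h₀ : 0 ≤ h)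
    (hlb : ∀ i, h ≤ f i) (hub : ∀ i, f i ≤ H) :
    2 * (∑ i, (f i) ^ 2) - (∑ i, f i) ^ 2 ≤ H ^ 2 - ((n : ℝ) - 2) ^ 2 * h ^ 2 := by
  obtain ⟨k, hk⟩ : ∃ k, n - 1 = k + 1 := ⟨n - 2, by omega⟩
  have hcast : ((n : ℝ) - 2) = (k : ℝ) := by
    have : n = k + 2 := by omega
    subst this; push_cast; ring
  rw [hcast]
  revert f hmono hlb hub
  rw [hk]
  intro f hmono hlb hub
  exact hessian_aux k h H f hmono h₀ hlb hub
end

section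
/- Let n ≥ 3 be an integer, let ρ > 0, and let a, b be real numbers with a ≥ b > 0. Then a² cosh²(aρ)/sinh²(aρ) − (n−2)² b² cosh²(bρ)/sinh²(bρ) − 2(n−1) b² ≤ −(n−1)² b² + (a² − b²). -/
open Real

private lemma sinh_le_mul_cosh {x : ℝ} (hx : 0 ≤ x) : Real.sinh x ≤ x * Real.cosh x := by
  have h : MonotoneOn (fun t : ℝ => t * Real.cosh t - Real.sinh t) (Set.Ici 0) := by
    apply monotoneOn_of_deriv_nonneg (convex_Ici 0)
    · exact ((continuous_id.mul Real.continuous_cosh).sub Real.continuous_sinh).continuousOn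
    · intro t ht
      exact (((hasDerivAt_id t).mul (Real.hasDerivAt_cosh t)).sub
        (Real.hasDerivAt_sinh t)).differentiableAt.differentiableWithinAt
    · intro t ht
      have hd : HasDerivAt (fun t : ℝ => t * Real.cosh t - Real.sinh t)
          (1 * Real.cosh t + t * Real.sinh t - Real.cosh t) t :=
        ((hasDerivAt_id t).mul (Real.hasDerivAt_cosh t)).sub (Real.hasDerivAt_sinh t)
      rw [hd.deriv]
      have ht' : 0 < t := by simpa using ht
      have := Real.sinh_pos_iff.2 ht'
      nlinarith
  have := h (Set.self_mem_Ici) (Set.mem_Ici.2 hx) hx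
  simpa using this

private lemma key_sinh {ρ a b : ℝ} (hρ : 0 < ρ) (hb : 0 < b) (hba : b ≤ a) :
    a * Real.sinh (b * ρ) ≤ b * Real.sinh (a * ρ) := by
  have h : MonotoneOn (fun t : ℝ => b * Real.sinh (t * ρ) - t * Real.sinh (b * ρ))
      (Set.Ici b) := by
    apply monotoneOn_of_deriv_nonneg (convex_Ici b)
    · fun_prop
    · intro t ht
      have hd : HasDerivAt (fun t : ℝ => b * Real.sinh (t * ρ) - t * Real.sinh (b * ρ))
          (b * (Real.cosh (t * ρ) * (1 * ρ)) - 1 * Real.sinh (b * ρ)) t :=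
        (((Real.hasDerivAt_sinh (t * ρ)).comp t
          ((hasDerivAt_id t).mul_const ρ)).const_mul b).sub
          ((hasDerivAt_id t).mul_const (Real.sinh (b * ρ)))
      exact hd.differentiableAt.differentiableWithinAt
    · intro t ht
      have ht' : b < t := by simpa using ht
      have hd : HasDerivAt (fun t : ℝ => b * Real.sinh (t * ρ) - t * Real.sinh (b * ρ))
          (b * (Real.cosh (t * ρ) * (1 * ρ)) - 1 * Real.sinh (b * ρ)) t :=
        (((Real.hasDerivAt_sinh (t * ρ)).comp t
          ((hasDerivAt_id t).mul_const ρ)).const_mul b).sub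
          ((hasDerivAt_id t).mul_const (Real.sinh (b * ρ)))
      rw [hd.deriv]
      have h1 : Real.sinh (b * ρ) ≤ (b * ρ) * Real.cosh (b * ρ) :=
        sinh_le_mul_cosh (by positivity)
      have h2 : Real.cosh (b * ρ) ≤ Real.cosh (t * ρ) := by
        rw [Real.cosh_le_cosh, abs_of_nonneg (by positivity), abs_of_nonneg (by nlinarith)]
        nlinarith
      nlinarith [mul_le_mul_of_nonneg_left h2 (mul_pos hb hρ).le]
  have := h (Set.self_mem_Ici) (Set.mem_Ici.2 hba) hba
  simp only at this
  nlinarith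

/-- For `n ≥ 3`, `ρ > 0` and `a ≥ b > 0`:
`a² cosh²(aρ)/sinh²(aρ) − (n−2)² b² cosh²(bρ)/sinh²(bρ) − 2(n−1) b²
  ≤ −(n−1)² b² + (a² − b²)`. -/
theorem curvature_comparison_estimate (n : ℕ) (hn : 3 ≤ n) (ρ a b : ℝ)
    (hρ : 0 < ρ) (hb : 0 < b) (hba : b ≤ a) :
    a ^ 2 * (Real.cosh (a * ρ)) ^ 2 / (Real.sinh (a * ρ)) ^ 2 -
        ((n : ℝ) - 2) ^ 2 * b ^ 2 * (Real.cosh (b * ρ)) ^ 2 / (Real.sinh (b * ρ)) ^ 2 -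
        2 * ((n : ℝ) - 1) * b ^ 2 ≤
      -((n : ℝ) - 1) ^ 2 * b ^ 2 + (a ^ 2 - b ^ 2) := by
  have hn' : (3 : ℝ) ≤ (n : ℝ) := by exact_mod_cast hn
  have ha : 0 < a := lt_of_lt_of_le hb hba
  have hsA : 0 < Real.sinh (a * ρ) := Real.sinh_pos_iff.2 (mul_pos ha hρ)
  have hsB : 0 < Real.sinh (b * ρ) := Real.sinh_pos_iff.2 (by positivity)
  have hkey := key_sinh hρ hb hba
  have hkey2 : a ^ 2 * Real.sinh (b * ρ) ^ 2 ≤ b ^ 2 * Real.sinh (a * ρ) ^ 2 := by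
    nlinarith [mul_le_mul hkey hkey (mul_nonneg ha.le hsB.le) (mul_nonneg hb.le hsA.le)]
  rw [Real.cosh_sq (a * ρ), Real.cosh_sq (b * ρ)]
  have h1 : (1 : ℝ) ≤ ((n : ℝ) - 2) ^ 2 := by nlinarith
  have eA : a ^ 2 * (Real.sinh (a * ρ) ^ 2 + 1) / Real.sinh (a * ρ) ^ 2 =
      a ^ 2 + a ^ 2 / Real.sinh (a * ρ) ^ 2 := by field_simp
  have eB : ((n : ℝ) - 2) ^ 2 * b ^ 2 * (Real.sinh (b * ρ) ^ 2 + 1) / Real.sinh (b * ρ) ^ 2 =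
      ((n : ℝ) - 2) ^ 2 * b ^ 2 + ((n : ℝ) - 2) ^ 2 * (b ^ 2 / Real.sinh (b * ρ) ^ 2) := by
    field_simp
  have hdiv : a ^ 2 / Real.sinh (a * ρ) ^ 2 ≤
      ((n : ℝ) - 2) ^ 2 * (b ^ 2 / Real.sinh (b * ρ) ^ 2) := by
    have h2 : a ^ 2 / Real.sinh (a * ρ) ^ 2 ≤ b ^ 2 / Real.sinh (b * ρ) ^ 2 := by
      rw [div_le_div_iff₀ (by positivity) (by positivity)]
      nlinarith
    have h3 : 0 ≤ b ^ 2 / Real.sinh (b * ρ) ^ 2 := by positivity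
    nlinarith
  rw [eA, eB]
  nlinarith
end
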